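/- If X* has the p-Dunford-Pettis relatively compact property and Y has the Schur property, then L(X,Y), the space of all bounded linear operators from X to Y with the operator norm, has the p-Dunford-Pettis relatively compact property. -/

import Mathlib

open Filter Topology Set
open scoped ENNReal

noncomputable section

/-- A sequence in a normed space is weakly null. -/
def WeaklyNull {E : Type*} [NormedAddCommGroup E] [NormedSpace ℝ E] (x : ℕ → E) : Prop :=
  ∀ φ : E →L[ℝ] ℝ, Tendsto (fun n => φ (x n)) atTop (𝓝 0)

/-- A bounded set on which every weakly null sequence of functionals converges uniformly. -/
def DunfordPettisSet {E : Type*} [NormedAddCommGroup E] [NormedSpace ℝ E] (K : Set E) : Prop :=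
  Bornology.IsBounded K ∧ ∀ f : ℕ → (E →L[ℝ] ℝ), WeaklyNull f →
    ∀ ε > 0, ∃ N : ℕ, ∀ n ≥ N, ∀ x ∈ K, |f n x| < ε

/-- Weakly `p`-summable sequence; for `p = ∞` this means weakly null. -/
def WeaklyPSummable (p : ℝ≥0∞) {E : Type*} [NormedAddCommGroup E] [NormedSpace ℝ E]
    (x : ℕ → E) : Prop :=
  if p = ∞ then WeaklyNull x else ∀ φ : E →L[ℝ] ℝ, Memℓp (fun n => φ (x n)) p

def NormNull {E : Type*} [NormedAddCommGroup E] (x : ℕ → E) : Prop :=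
  Tendsto (fun n => ‖x n‖) atTop (𝓝 0)

def PRightNull (p : ℝ≥0∞) {E : Type*} [NormedAddCommGroup E] [NormedSpace ℝ E]
    (x : ℕ → E) : Prop :=
  WeaklyPSummable p x ∧ DunfordPettisSet (Set.range x)

def WeaklyPCauchy (p : ℝ≥0∞) {E : Type*} [NormedAddCommGroup E] [NormedSpace ℝ E]
    (x : ℕ → E) : Prop :=
  ∀ k l : ℕ → ℕ, StrictMono k → StrictMono l →
    WeaklyPSummable p (fun n => x (k n) - x (l n))

def PRightCauchy (p : ℝ≥0∞) {E : Type*} [NormedAddCommGroup E] [NormedSpace ℝ E]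
    (x : ℕ → E) : Prop :=
  WeaklyPCauchy p x ∧ DunfordPettisSet (Set.range x)

/-- `p`-Dunford-Pettis relatively compact property. -/
def HasDPrcP (p : ℝ≥0∞) (E : Type*) [NormedAddCommGroup E] [NormedSpace ℝ E] : Prop :=
  ∀ x : ℕ → E, PRightNull p x → NormNull x

/-- A (not necessarily linear) map is Dunford-Pettis `p`-convergent. -/
def DPpConvergent (p : ℝ≥0∞) {E F : Type*} [NormedAddCommGroup E] [NormedSpace ℝ E]
    [NormedAddCommGroup F] (f : E → F) : Prop :=
  ∀ x : ℕ → E, PRightNull p x → NormNull (fun n => f (x n))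

/-- A map is `p`-convergent. -/
def PConvergent (p : ℝ≥0∞) {E F : Type*} [NormedAddCommGroup E] [NormedSpace ℝ E]
    [NormedAddCommGroup F] (f : E → F) : Prop :=
  ∀ x : ℕ → E, WeaklyPSummable p x → NormNull (fun n => f (x n))

/-- The adjoint of a continuous linear operator between normed spaces. -/
def opAdjoint {E F : Type*} [NormedAddCommGroup E] [NormedSpace ℝ E]
    [NormedAddCommGroup F] [NormedSpace ℝ F] (T : E →L[ℝ] F) :
    (F →L[ℝ] ℝ) →L[ℝ] (E →L[ℝ] ℝ) :=
  (ContinuousLinearMap.compL ℝ E F ℝ).flip T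


/-- The Schur property: every weakly null sequence is norm null. -/
def SchurProperty (E : Type*) [NormedAddCommGroup E] [NormedSpace ℝ E] : Prop :=
  ∀ x : ℕ → E, WeaklyNull x → NormNull x

/-!
For `y* ∈ Y*` the evaluation `ψ_{y*} : T ↦ T* y*` is a bounded operator `L(X,Y) → X*`, and bounded
operators preserve weak `p`-summability and Dunford–Pettis sets. So if `(Tₙ)` is `p`-right null in
`L(X,Y)`, then `(Tₙ* y*)` is `p`-right null in `X*`, hence norm null. Choosing `xₙ` in the unit ball with
`‖Tₙ‖ ≤ ‖Tₙ xₙ‖ + εₙ`, `εₙ → 0`, the bound `|y* (Tₙ xₙ)| ≤ ‖Tₙ* y*‖` makes `(Tₙ xₙ)` weakly null,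
so norm null by the Schur property of `Y`, and therefore `‖Tₙ‖ → 0`.
-/

section

variable {E F : Type*} [NormedAddCommGroup E] [NormedSpace ℝ E]
  [NormedAddCommGroup F] [NormedSpace ℝ F]

lemma WeaklyPSummable.map (u : E →L[ℝ] F) {p : ℝ≥0∞} {x : ℕ → E}
    (hx : WeaklyPSummable p x) : WeaklyPSummable p (fun n => u (x n)) := by
  unfold WeaklyPSummable WeaklyNull at hx ⊢
  split_ifs at hx ⊢ <;> exact fun φ => hx (φ.comp u)

lemma WeaklyNull.comp_right {f : ℕ → F →L[ℝ] ℝ} (hf : WeaklyNull f) (u : E →L[ℝ] F) :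
    WeaklyNull (fun n => (f n).comp u) :=
  fun Ξ => hf (Ξ.comp (opAdjoint u))

lemma DunfordPettisSet.image {K : Set E} (hK : DunfordPettisSet K) (u : E →L[ℝ] F) :
    DunfordPettisSet (u '' K) := by
  refine ⟨u.lipschitz.isBounded_image hK.1, fun f hf ε hε => ?_⟩
  obtain ⟨N, hN⟩ := hK.2 _ (hf.comp_right u) ε hε
  exact ⟨N, fun n hn _ ⟨x, hx, hux⟩ => hux ▸ hN n hn x hx⟩

lemma PRightNull.map {p : ℝ≥0∞} {x : ℕ → E} (hx : PRightNull p x) (u : E →L[ℝ] F) :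
    PRightNull p (fun n => u (x n)) :=
  ⟨hx.1.map u, range_comp' u x ▸ hx.2.image u⟩

lemma ContinuousLinearMap.exists_norm_le_one_opNorm_le_add (T : E →L[ℝ] F) {ε : ℝ}
    (hε : 0 < ε) : ∃ x : E, ‖x‖ ≤ 1 ∧ ‖T‖ ≤ ‖T x‖ + ε := by
  obtain ⟨x, hx, hTx⟩ := T.exists_lt_apply_of_lt_opNorm (sub_lt_self ‖T‖ hε)
  exact ⟨x, hx.le, by linarith⟩

lemma weaklyNull_apply_of_normNull_comp {T : ℕ → E →L[ℝ] F}
    (hT : ∀ φ : F →L[ℝ] ℝ, NormNull (fun n => φ.comp (T n)))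
    {x : ℕ → E} (hx : ∀ n, ‖x n‖ ≤ 1) : WeaklyNull (fun n => T n (x n)) := by
  refine fun φ => squeeze_zero_norm (fun n => ?_) (hT φ)
  calc ‖φ.comp (T n) (x n)‖ ≤ ‖φ.comp (T n)‖ * ‖x n‖ := (φ.comp (T n)).le_opNorm _
    _ ≤ ‖φ.comp (T n)‖ := mul_le_of_le_one_right (norm_nonneg _) (hx n)

lemma SchurProperty.normNull_of_normNull_comp (hF : SchurProperty F) {T : ℕ → E →L[ℝ] F}
    (hT : ∀ φ : F →L[ℝ] ℝ, NormNull (fun n => φ.comp (T n))) : NormNull T := by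
  choose x hx hTx using fun n : ℕ =>
    (T n).exists_norm_le_one_opNorm_le_add (Nat.one_div_pos_of_nat (α := ℝ) (n := n))
  have hTx_null : NormNull (fun n => T n (x n)) :=
    hF _ (weaklyNull_apply_of_normNull_comp hT hx)
  have hbound : Tendsto (fun n : ℕ => ‖T n (x n)‖ + 1 / ((n : ℝ) + 1)) atTop (𝓝 0) := by
    simpa using hTx_null.add tendsto_one_div_add_atTop_nhds_zero_nat
  exact squeeze_zero (fun n => norm_nonneg _) hTx hbound

end

theorem stmt14_general {X Y : Type*} [NormedAddCommGroup X] [NormedSpace ℝ X]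
    [NormedAddCommGroup Y] [NormedSpace ℝ Y]
    (p : ℝ≥0∞)
    (hX : HasDPrcP p (X →L[ℝ] ℝ)) (hY : SchurProperty Y) :
    HasDPrcP p (X →L[ℝ] Y) :=
  fun _ hT => hY.normNull_of_normNull_comp fun φ =>
    hX _ (hT.map (ContinuousLinearMap.compL ℝ X Y ℝ φ))

theorem stmt14 {X Y : Type*} [NormedAddCommGroup X] [NormedSpace ℝ X] [CompleteSpace X]
    [NormedAddCommGroup Y] [NormedSpace ℝ Y] [CompleteSpace Y]
    (p : ℝ≥0∞) (hp : 1 ≤ p)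
    (hX : HasDPrcP p (X →L[ℝ] ℝ)) (hY : SchurProperty Y) :
    HasDPrcP p (X →L[ℝ] Y) :=
  stmt14_general p hX hY
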